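/- (Recursive distance inequality) Let d_τ := d_v(P_T^{(τ)} − π) denote the total variation distance of the herded Gibbs empirical distribution at sweep τ from the target π. Under the hypotheses of the main theorem (fully connected graph, fixed scan, Dobrushin coefficient η < 1 of the Gibbs sweep kernel), for all T ≥ T* and τ ≥ 0: d_{τ+1} ≤ 2N/(lT) + η · d_τ. -/

import Mathlib

open Finset

/-- Joint states of `N` binary variables. -/
abbrev GState (N : ℕ) := Fin N → Bool

/-- Full conditional probability π(Xᵢ = b | x₋ᵢ) for a target distribution π. -/
noncomputable def condProb {N : ℕ} (π : GState N → ℝ) (i : Fin N) (x : GState N)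
    (b : Bool) : ℝ :=
  π (Function.update x i b) / (π (Function.update x i true) + π (Function.update x i false))

/-- Variable updated at step `t ≥ 1` of a fixed systematic scan (step kN + i with
1 ≤ i ≤ N updates the i-th variable, i.e. index i − 1). -/
def scanVar (N : ℕ) (hN : 0 < N) (t : ℕ) : Fin N := ⟨(t - 1) % N, Nat.mod_lt _ hN⟩

/-- A herded Gibbs trajectory on a fully connected graph of `N` binary variables with
target `π`: one weight per variable `i` and per assignment of all the other variables
(weights are indexed by full states but only the off-`i` coordinates matter); at step
`t+1` the scanned variable emits 𝟙[w > 0] and only its active weight is updated. -/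
structure HerdedGibbs (N : ℕ) (hN : 0 < N) (π : GState N → ℝ) where
  X : ℕ → GState N
  W : ℕ → Fin N → GState N → ℝ
  init_support : 0 < π (X 0)
  init_w : ∀ i x, condProb π i x true - 1 < W 0 i x ∧ W 0 i x ≤ condProb π i x true
  step_other : ∀ t j, j ≠ scanVar N hN (t + 1) → X (t + 1) j = X t j
  step_cur : ∀ t, X (t + 1) (scanVar N hN (t + 1))
      = decide (0 < W t (scanVar N hN (t + 1)) (X t))
  w_active : ∀ t x, (∀ j, j ≠ scanVar N hN (t + 1) → x j = X t j) →
      W (t + 1) (scanVar N hN (t + 1)) x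
        = W t (scanVar N hN (t + 1)) x + condProb π (scanVar N hN (t + 1)) x true
          - (if X (t + 1) (scanVar N hN (t + 1)) = true then 1 else 0)
  w_frozen : ∀ t i x, ¬(i = scanVar N hN (t + 1) ∧ ∀ j, j ≠ i → x j = X t j) →
      W (t + 1) i x = W t i x

/-- Transition matrix 𝒯ᵢ of regular Gibbs updating variable `i`. -/
noncomputable def stepKernel {N : ℕ} (π : GState N → ℝ) (i : Fin N) :
    Matrix (GState N) (GState N) ℝ :=
  fun x y => if ∀ j, j ≠ i → x j = y j then condProb π i x (y i) else 0

/-- Full-sweep Gibbs transition kernel 𝒯 = 𝒯₁𝒯₂⋯𝒯_N. -/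
noncomputable def sweepKernel {N : ℕ} (π : GState N → ℝ) :
    Matrix (GState N) (GState N) ℝ :=
  (List.ofFn fun i : Fin N => stepKernel π i).prod

/-- Total variation distance d_v(μ − ν) = ‖μ − ν‖₁ / 2 on a finite state space. -/
noncomputable def tvDist {α : Type*} [Fintype α] (μ ν : α → ℝ) : ℝ :=
  (∑ x, |μ x - ν x|) / 2

/-- Dobrushin ergodic coefficient of a transition matrix. -/
noncomputable def dobrushin {α : Type*} [Fintype α] (K : Matrix α α ℝ) : ℝ :=
  ⨆ x, ⨆ x', tvDist (K x) (K x')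

/-- Empirical distribution of `T` end-of-sweep samples starting at sweep `τ`. -/
noncomputable def empDist {N : ℕ} (X : ℕ → GState N) (τ T : ℕ) : GState N → ℝ :=
  fun x => (((Finset.Ico τ (τ + T)).filter fun k => X (k * N) = x).card : ℝ) / T

/-- N_num: number of occurrences of the joint state (x₋ᵢ, b) at substep `i` of sweeps
τ, …, τ+T−1. -/
def empNum {N : ℕ} (hN : 0 < N) (X : ℕ → GState N) (τ T i : ℕ) (x : GState N)
    (b : Bool) : ℕ :=
  ((Finset.Ico τ (τ + T)).filter fun k =>
    (∀ j, j ≠ scanVar N hN i → X (k * N + i) j = x j)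
      ∧ X (k * N + i) (scanVar N hN i) = b).card

/-- N_den: number of occurrences of the conditioning state x₋ᵢ at substep `i − 1`. -/
def empDen {N : ℕ} (hN : 0 < N) (X : ℕ → GState N) (τ T i : ℕ) (x : GState N) : ℕ :=
  ((Finset.Ico τ (τ + T)).filter fun k =>
    ∀ j, j ≠ scanVar N hN i → X (k * N + i - 1) j = x j).card

/-- Empirical herded Gibbs single-step transition kernel T̃⁽ᵗ⁾_{T,i}; entries with an
unvisited conditioning state are set to the regular Gibbs kernel. -/
noncomputable def empStepKernel {N : ℕ} (hN : 0 < N) (π : GState N → ℝ)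
    (X : ℕ → GState N) (τ T i : ℕ) : Matrix (GState N) (GState N) ℝ :=
  fun x y => if ∀ j, j ≠ scanVar N hN i → x j = y j then
      (if empDen hN X τ T i x = 0 then condProb π (scanVar N hN i) x (y (scanVar N hN i))
       else (empNum hN X τ T i x (y (scanVar N hN i)) : ℝ) / (empDen hN X τ T i x : ℝ))
    else 0

/-- Empirical full-sweep herded Gibbs kernel T̃⁽ᵗ⁾_T = T̃⁽ᵗ⁾_{T,1}⋯T̃⁽ᵗ⁾_{T,N}. -/
noncomputable def empSweepKernel {N : ℕ} (hN : 0 < N) (π : GState N → ℝ)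
    (X : ℕ → GState N) (τ T : ℕ) : Matrix (GState N) (GState N) ℝ :=
  (List.ofFn fun i : Fin N => empStepKernel hN π X τ T (i + 1)).prod

/-!
Compare the empirical distribution `P_m` of the states visited at substep `m` of the sweeps
with one Gibbs update of `P_{m-1}`. At a state `y` they differ by `N_num − N_den · π(yᵢ | y₋ᵢ)`
divided by `T`, and herding telescopes this count defect into the change of one weight over
`T` sweeps; the weights stay in a window of width less than `2`. When both states of the
class have positive probability they are each visited at least `lT − B ≥ lT/2` times, so
`N_den ≥ lT` and the defect is at most `2 N_den / (lT)`; otherwise it vanishes, because the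
chain never visits a state of probability zero. Summing over `y` costs `2/(lT)` per substep,
and Gibbs kernels are nonexpansive, so `d_v(P^{(τ+1)} − P^{(τ)} 𝒯) ≤ 2N/(lT)`. Finally
`π 𝒯 = π` and the Dobrushin contraction give `d_v(P^{(τ)} 𝒯 − π) ≤ η d_τ`.
-/

section TotalVariation

variable {α : Type*} [Fintype α]

lemma tvDist_self (μ : α → ℝ) : tvDist μ μ = 0 := by
  simp [tvDist]

lemma tvDist_triangle (μ ν ρ : α → ℝ) : tvDist μ ρ ≤ tvDist μ ν + tvDist ν ρ := by
  rw [tvDist, tvDist, tvDist, ← add_div, ← Finset.sum_add_distrib]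
  gcongr with x
  exact abs_sub_le _ _ _

lemma tvDist_vecMul_le (K : Matrix α α ℝ) (hK0 : ∀ x y, 0 ≤ K x y)
    (hK1 : ∀ x, ∑ y, K x y ≤ 1) (μ ν : α → ℝ) :
    tvDist (Matrix.vecMul μ K) (Matrix.vecMul ν K) ≤ tvDist μ ν := by
  refine div_le_div_of_nonneg_right ?_ zero_le_two
  calc ∑ y, |Matrix.vecMul μ K y - Matrix.vecMul ν K y|
      = ∑ y, |∑ x, (μ x - ν x) * K x y| := by
        simp only [Matrix.vecMul, dotProduct, sub_mul, Finset.sum_sub_distrib]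
    _ ≤ ∑ y, ∑ x, |μ x - ν x| * K x y := by
        gcongr with y
        refine (Finset.abs_sum_le_sum_abs _ _).trans_eq ?_
        simp only [abs_mul, abs_of_nonneg (hK0 _ y)]
    _ = ∑ x, |μ x - ν x| * ∑ y, K x y := by
        rw [Finset.sum_comm]
        simp only [Finset.mul_sum]
    _ ≤ ∑ x, |μ x - ν x| := by
        gcongr with x
        exact mul_le_of_le_one_right (abs_nonneg _) (hK1 x)

lemma tvDist_le_dobrushin (K : Matrix α α ℝ) (x x' : α) :
    tvDist (K x) (K x') ≤ dobrushin K :=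
  (le_ciSup (Finite.bddAbove_range _) x').trans
    (le_ciSup (Finite.bddAbove_range fun x => ⨆ x', tvDist (K x) (K x')) x)

lemma sum_posPart_eq_sum_negPart {f : α → ℝ} (hf : ∑ x, f x = 0) :
    ∑ x, (f x)⁺ = ∑ x, (f x)⁻ := by
  rw [← sub_eq_zero, ← Finset.sum_sub_distrib, ← hf]
  simp only [posPart_sub_negPart]

lemma tvDist_eq_sum_posPart {μ ν : α → ℝ} (hsum : ∑ x, μ x = ∑ x, ν x) :
    tvDist μ ν = ∑ x, (μ x - ν x)⁺ := by
  have hf : ∑ x, (μ x - ν x) = 0 := by rw [Finset.sum_sub_distrib, hsum, sub_self]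
  rw [tvDist]
  simp only [← posPart_add_negPart, Finset.sum_add_distrib,
    ← sum_posPart_eq_sum_negPart hf]
  ring

lemma sum_posPart_mul_vecMul {f : α → ℝ} (hf : ∑ x, f x = 0) (K : Matrix α α ℝ) (y : α) :
    (∑ x, (f x)⁺) * Matrix.vecMul f K y
      = ∑ x, ∑ x', (f x)⁺ * (f x')⁻ * (K x y - K x' y) := by
  have hvec : Matrix.vecMul f K y = ∑ x, (f x)⁺ * K x y - ∑ x, (f x)⁻ * K x y := by
    simp only [Matrix.vecMul, dotProduct, ← Finset.sum_sub_distrib, ← sub_mul,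
      posPart_sub_negPart]
  calc (∑ x, (f x)⁺) * Matrix.vecMul f K y
      = (∑ x, (f x)⁺ * K x y) * ∑ x', (f x')⁻ - (∑ x, (f x)⁺) * ∑ x', (f x')⁻ * K x' y := by
        rw [hvec, ← sum_posPart_eq_sum_negPart hf]
        ring
    _ = _ := by
        simp only [Finset.sum_mul_sum, ← Finset.sum_sub_distrib]
        exact Finset.sum_congr rfl fun x _ => Finset.sum_congr rfl fun x' _ => by ring

lemma sum_posPart_mul_sum_abs_vecMul_le {f : α → ℝ} (hf : ∑ x, f x = 0) (K : Matrix α α ℝ) :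
    (∑ x, (f x)⁺) * ∑ y, |Matrix.vecMul f K y| ≤ 2 * dobrushin K * (∑ x, (f x)⁺) ^ 2 := by
  have hpm : ∀ x x', 0 ≤ (f x)⁺ * (f x')⁻ := fun x x' =>
    mul_nonneg (posPart_nonneg _) (negPart_nonneg _)
  calc (∑ x, (f x)⁺) * ∑ y, |Matrix.vecMul f K y|
      = ∑ y, |∑ x, ∑ x', (f x)⁺ * (f x')⁻ * (K x y - K x' y)| := by
        rw [Finset.mul_sum]
        refine Finset.sum_congr rfl fun y _ => ?_
        rw [← sum_posPart_mul_vecMul hf, abs_mul,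
          abs_of_nonneg (Finset.sum_nonneg fun x _ => posPart_nonneg (f x))]
    _ ≤ ∑ y, ∑ x, ∑ x', (f x)⁺ * (f x')⁻ * |K x y - K x' y| := by
        gcongr with y
        refine (Finset.abs_sum_le_sum_abs _ _).trans (Finset.sum_le_sum fun x _ => ?_)
        refine (Finset.abs_sum_le_sum_abs _ _).trans_eq (Finset.sum_congr rfl fun x' _ => ?_)
        rw [abs_mul, abs_of_nonneg (hpm x x')]
    _ = ∑ x, ∑ x', (f x)⁺ * (f x')⁻ * (2 * tvDist (K x) (K x')) := by
        rw [Finset.sum_comm]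
        refine Finset.sum_congr rfl fun x _ => ?_
        rw [Finset.sum_comm]
        refine Finset.sum_congr rfl fun x' _ => ?_
        rw [tvDist, ← Finset.mul_sum]
        ring
    _ ≤ ∑ x, ∑ x', (f x)⁺ * (f x')⁻ * (2 * dobrushin K) := by
        gcongr with x _ x' _
        exact tvDist_le_dobrushin K x x'
    _ = 2 * dobrushin K * (∑ x, (f x)⁺) ^ 2 := by
        simp only [← Finset.sum_mul, ← Finset.mul_sum, ← sum_posPart_eq_sum_negPart hf]
        ring

lemma tvDist_vecMul_le_dobrushin_mul (K : Matrix α α ℝ) {μ ν : α → ℝ}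
    (hsum : ∑ x, μ x = ∑ x, ν x) :
    tvDist (Matrix.vecMul μ K) (Matrix.vecMul ν K) ≤ dobrushin K * tvDist μ ν := by
  set f : α → ℝ := μ - ν
  have hf : ∑ x, f x = 0 := by simp only [f, Pi.sub_apply, Finset.sum_sub_distrib, hsum, sub_self]
  have htv : tvDist (Matrix.vecMul μ K) (Matrix.vecMul ν K)
      = (∑ y, |Matrix.vecMul f K y|) / 2 := by
    simp only [tvDist, f, Matrix.sub_vecMul, Pi.sub_apply]
  have hc : tvDist μ ν = ∑ x, (f x)⁺ := tvDist_eq_sum_posPart hsum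
  rw [htv, hc]
  rcases (Finset.sum_nonneg fun x _ => posPart_nonneg (f x)).eq_or_lt with hc0 | hcpos
  · have hf0 : f = 0 := funext fun x => by
      have hp := (Finset.sum_eq_zero_iff_of_nonneg fun x _ => posPart_nonneg (f x)).1
        hc0.symm x (Finset.mem_univ x)
      have hn := (Finset.sum_eq_zero_iff_of_nonneg fun x _ => negPart_nonneg (f x)).1
        ((sum_posPart_eq_sum_negPart hf).symm.trans hc0.symm) x (Finset.mem_univ x)
      rw [Pi.zero_apply, ← posPart_sub_negPart (f x), hp, hn, sub_zero]
    rw [← hc0, hf0]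
    simp
  · have key := (sum_posPart_mul_sum_abs_vecMul_le hf K).trans_eq
      (by ring : 2 * dobrushin K * (∑ x, (f x)⁺) ^ 2
        = (∑ x, (f x)⁺) * (2 * dobrushin K * ∑ x, (f x)⁺))
    linarith [le_of_mul_le_mul_left key hcpos]

lemma tvDist_vecMul_ofFn_prod_le [DecidableEq α] {n : ℕ} (p : ℕ → α → ℝ)
    (K : Fin n → Matrix α α ℝ) (hK0 : ∀ m x y, 0 ≤ K m x y) (hK1 : ∀ m x, ∑ y, K m x y ≤ 1)
    {ε : ℝ} (h : ∀ m : Fin n, tvDist (p (m + 1)) (Matrix.vecMul (p m) (K m)) ≤ ε) :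
    tvDist (p n) (Matrix.vecMul (p 0) (List.ofFn K).prod) ≤ n * ε := by
  induction n with
  | zero => simp [tvDist_self]
  | succ n ih =>
    have hprev := ih (fun m => K m.castSucc) (fun m => hK0 _) (fun m => hK1 _)
      (fun m => h m.castSucc)
    have hlast := h (Fin.last n)
    rw [Fin.val_last] at hlast
    rw [List.ofFn_succ', List.prod_concat, ← Matrix.vecMul_vecMul]
    calc _ ≤ tvDist (p (n + 1)) (Matrix.vecMul (p n) (K (Fin.last n)))
          + tvDist (Matrix.vecMul (p n) (K (Fin.last n)))
              (Matrix.vecMul (Matrix.vecMul (p 0) (List.ofFn fun m => K m.castSucc).prod)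
                (K (Fin.last n))) := tvDist_triangle _ _ _
      _ ≤ ε + n * ε := add_le_add hlast ((tvDist_vecMul_le _ (hK0 _) (hK1 _) _ _).trans hprev)
      _ = (n + 1 : ℕ) * ε := by push_cast; ring

end TotalVariation

lemma Matrix.vecMul_list_prod_eq_self {α : Type*} [Fintype α] [DecidableEq α] {v : α → ℝ}
    {L : List (Matrix α α ℝ)} (h : ∀ K ∈ L, Matrix.vecMul v K = v) :
    Matrix.vecMul v L.prod = v := by
  induction L with
  | nil => rw [List.prod_nil, Matrix.vecMul_one]
  | cons K L ih =>
    rw [List.prod_cons, ← Matrix.vecMul_vecMul, h K List.mem_cons_self]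
    exact ih fun K' hK' => h K' (List.mem_cons_of_mem K hK')

section GibbsKernel

variable {N : ℕ}

lemma filter_agreeOff_eq_image (i : Fin N) (x : GState N) :
    (Finset.univ.filter fun y : GState N => ∀ j, j ≠ i → x j = y j)
      = Finset.univ.image (Function.update x i) := by
  ext y
  simp only [Finset.mem_filter, Finset.mem_univ, true_and, Finset.mem_image]
  constructor
  · exact fun h => ⟨y i, (Function.eq_update_iff.2 ⟨rfl, fun j hj => (h j hj).symm⟩).symm⟩
  · rintro ⟨b, rfl⟩ j hj
    exact (Function.update_of_ne hj _ _).symm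

lemma sum_ite_agreeOff {M : Type*} [AddCommMonoid M] (i : Fin N) (x : GState N)
    (g : GState N → M) :
    ∑ y, (if ∀ j, j ≠ i → x j = y j then g y else 0) = ∑ b, g (Function.update x i b) := by
  rw [← Finset.sum_filter, filter_agreeOff_eq_image,
    Finset.sum_image (Function.update_injective x i).injOn]

variable {π : GState N → ℝ}

lemma condProb_update (i : Fin N) (x : GState N) (b c : Bool) :
    condProb π i (Function.update x i b) c = condProb π i x c := by
  simp only [condProb, Function.update_idem]

lemma condProb_eq_zero {i : Fin N} {x : GState N} {b : Bool}
    (h : π (Function.update x i b) = 0) : condProb π i x b = 0 := by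
  rw [condProb, h, zero_div]

lemma condProb_nonneg (hπ0 : ∀ x, 0 ≤ π x) (i : Fin N) (x : GState N) (b : Bool) :
    0 ≤ condProb π i x b :=
  div_nonneg (hπ0 _) (add_nonneg (hπ0 _) (hπ0 _))

lemma sum_condProb_le_one (i : Fin N) (x : GState N) :
    ∑ b, condProb π i x b ≤ 1 := by
  rw [Fintype.sum_bool, condProb, condProb, ← add_div]
  exact div_self_le_one _

lemma sum_condProb_eq_one {i : Fin N} {x : GState N}
    (h : π (Function.update x i true) + π (Function.update x i false) ≠ 0) :
    ∑ b, condProb π i x b = 1 := by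
  rw [Fintype.sum_bool, condProb, condProb, ← add_div, div_self h]

lemma condProb_le_one (hπ0 : ∀ x, 0 ≤ π x) (i : Fin N) (x : GState N) (b : Bool) :
    condProb π i x b ≤ 1 :=
  (Finset.single_le_sum (fun c _ => condProb_nonneg hπ0 i x c) (Finset.mem_univ b)).trans
    (sum_condProb_le_one i x)

lemma stepKernel_nonneg (hπ0 : ∀ x, 0 ≤ π x) (i : Fin N) (x y : GState N) :
    0 ≤ stepKernel π i x y := by
  unfold stepKernel
  split_ifs
  exacts [condProb_nonneg hπ0 i x _, le_rfl]

lemma sum_stepKernel_le_one (i : Fin N) (x : GState N) :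
    ∑ y, stepKernel π i x y ≤ 1 := by
  simp only [stepKernel, sum_ite_agreeOff, Function.update_self]
  exact sum_condProb_le_one i x

lemma vecMul_stepKernel (μ : GState N → ℝ) (i : Fin N) (y : GState N) :
    Matrix.vecMul μ (stepKernel π i) y
      = (∑ b, μ (Function.update y i b)) * condProb π i y (y i) := by
  have hsymm : ∀ x : GState N, (∀ j, j ≠ i → x j = y j) ↔ ∀ j, j ≠ i → y j = x j :=
    fun x => forall₂_congr fun _ _ => eq_comm
  simp only [Matrix.vecMul, dotProduct, stepKernel, mul_ite, mul_zero, hsymm,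
    sum_ite_agreeOff, Finset.sum_mul, condProb_update]

lemma vecMul_stepKernel_self (hπ0 : ∀ x, 0 ≤ π x) (i : Fin N) :
    Matrix.vecMul π (stepKernel π i) = π := by
  funext y
  have hle : π y ≤ ∑ b, π (Function.update y i b) := by
    simpa only [Function.update_eq_self] using
      Finset.single_le_sum (fun b _ => hπ0 (Function.update y i b)) (Finset.mem_univ (y i))
  rw [vecMul_stepKernel, condProb, Function.update_eq_self,
    ← Fintype.sum_bool fun b => π (Function.update y i b), mul_comm]
  exact div_mul_cancel_of_imp fun h => le_antisymm (h ▸ hle) (hπ0 y)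

lemma vecMul_sweepKernel_self (hπ0 : ∀ x, 0 ≤ π x) :
    Matrix.vecMul π (sweepKernel π) = π :=
  Matrix.vecMul_list_prod_eq_self fun K hK => by
    obtain ⟨i, rfl⟩ := List.mem_ofFn.1 hK
    exact vecMul_stepKernel_self hπ0 i

end GibbsKernel

section Scan

variable {N : ℕ} {hN : 0 < N}

lemma scanVar_mul_add (k t : ℕ) : scanVar N hN (k * N + t + 1) = scanVar N hN (t + 1) := by
  simp only [scanVar, Nat.add_sub_cancel, Nat.mul_add_mod_self_right]

lemma scanVar_add_ne (t r : ℕ) (hr0 : 0 < r) (hr : r < N) :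
    scanVar N hN (t + r + 1) ≠ scanVar N hN (t + 1) := by
  intro h
  have hmod : (t + r) % N = (t + 0) % N := by
    simpa only [scanVar, Nat.add_sub_cancel, Fin.mk.injEq, add_zero] using h
  have := Nat.ModEq.add_left_cancel' t hmod
  rw [Nat.ModEq, Nat.mod_eq_of_lt hr, Nat.zero_mod] at this
  omega

lemma scanVar_succ (i : Fin N) : scanVar N hN (i + 1) = i :=
  Fin.ext (by simp [scanVar, Nat.mod_eq_of_lt i.isLt])

end Scan

namespace HerdedGibbs

variable {N : ℕ} {hN : 0 < N} {π : GState N → ℝ} (hg : HerdedGibbs N hN π)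

theorem X_succ (t : ℕ) :
    hg.X (t + 1) = Function.update (hg.X t) (scanVar N hN (t + 1))
      (decide (0 < hg.W t (scanVar N hN (t + 1)) (hg.X t))) :=
  Function.eq_update_iff.2 ⟨hg.step_cur t, hg.step_other t⟩

theorem W_succ (t : ℕ) (i : Fin N) (x : GState N) :
    hg.W (t + 1) i x = hg.W t i x +
      if i = scanVar N hN (t + 1) ∧ ∀ j, j ≠ i → x j = hg.X t j then
        condProb π i x true - (if hg.X (t + 1) i = true then 1 else 0)
      else 0 := by
  by_cases h : i = scanVar N hN (t + 1) ∧ ∀ j, j ≠ i → x j = hg.X t j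
  · obtain ⟨rfl, hx⟩ := h
    rw [if_pos ⟨rfl, hx⟩, hg.w_active t x hx]
    ring
  · rw [if_neg h, hg.w_frozen t i x h, add_zero]

theorem W_sub_W_update (i : Fin N) (x : GState N) (b : Bool) (t : ℕ) :
    hg.W t i x - hg.W t i (Function.update x i b)
      = hg.W 0 i x - hg.W 0 i (Function.update x i b) := by
  induction t with
  | zero => rfl
  | succ t ih =>
    have hagree : (∀ j, j ≠ i → Function.update x i b j = hg.X t j)
        ↔ ∀ j, j ≠ i → x j = hg.X t j :=
      forall₂_congr fun j hj => by rw [Function.update_of_ne hj]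
    simp only [hg.W_succ, hagree, condProb_update, ← ih]
    ring

theorem W_nonpos_of_condProb_eq_zero {i : Fin N} {x : GState N}
    (h : condProb π i x true = 0) (t : ℕ) : hg.W t i x ≤ 0 := by
  induction t with
  | zero => simpa only [h] using (hg.init_w i x).2
  | succ t ih =>
    rw [hg.W_succ, h]
    split_ifs <;> linarith

theorem W_pos_of_condProb_eq_one {i : Fin N} {x : GState N}
    (h : condProb π i x true = 1) (t : ℕ) : 0 < hg.W t i x := by
  induction t with
  | zero => simpa only [h, sub_self] using (hg.init_w i x).1
  | succ t ih =>
    rw [hg.W_succ, h]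
    split_ifs <;> linarith

/-- The weight that would select a state of probability zero stays on the wrong side of
zero forever. -/
theorem pi_X_pos (hπ0 : ∀ x, 0 ≤ π x) (t : ℕ) : 0 < π (hg.X t) := by
  induction t with
  | zero => exact hg.init_support
  | succ t ih =>
    set i := scanVar N hN (t + 1)
    set x := hg.X t
    have hx : Function.update x i (x i) = x := Function.update_eq_self i x
    rw [hg.X_succ]
    by_cases hw : 0 < hg.W t i x
    · rw [decide_eq_true hw]
      refine (hπ0 _).lt_of_ne fun h0 => ?_
      exact (hg.W_nonpos_of_condProb_eq_zero (condProb_eq_zero h0.symm) t).not_gt hw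
    · rw [decide_eq_false hw]
      refine (hπ0 _).lt_of_ne fun h0 => hw (hg.W_pos_of_condProb_eq_one ?_ t)
      have hpos : 0 < π (Function.update x i true) := by
        cases hxi : x i <;> rw [hxi] at hx
        · rw [hx] at h0; exact absurd h0.symm ih.ne'
        · rwa [hx]
      rw [condProb, ← h0, add_zero, div_self hpos.ne']

/-- The weight driving step `t + 1` is that of the current state, which differs from
`W t i x` by `0` or by the initial gap between `x` and its flip. -/
theorem W_bounds (hπ0 : ∀ x, 0 ≤ π x) (i : Fin N) (x : GState N) (t : ℕ) :
    condProb π i x true - 1 + min (hg.W 0 i x - hg.W 0 i (Function.update x i (!x i))) 0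
        < hg.W t i x
      ∧ hg.W t i x
        ≤ condProb π i x true + max (hg.W 0 i x - hg.W 0 i (Function.update x i (!x i))) 0 := by
  set c := hg.W 0 i x - hg.W 0 i (Function.update x i (!x i))
  have hp0 := condProb_nonneg hπ0 i x true
  have hp1 := condProb_le_one hπ0 i x true
  induction t with
  | zero =>
    have := hg.init_w i x
    constructor <;> linarith [min_le_right c 0, le_max_right c 0]
  | succ t ih =>
    rw [hg.W_succ]
    by_cases hact : i = scanVar N hN (t + 1) ∧ ∀ j, j ≠ i → x j = hg.X t j
    · obtain ⟨hi, hx⟩ := hact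
      rw [if_pos ⟨hi, hx⟩]
      have hgap : min c 0 ≤ hg.W t i x - hg.W t i (hg.X t)
          ∧ hg.W t i x - hg.W t i (hg.X t) ≤ max c 0 := by
        have hX : hg.X t = Function.update x i (hg.X t i) :=
          Function.eq_update_iff.2 ⟨rfl, fun j hj => (hx j hj).symm⟩
        rw [hX, hg.W_sub_W_update]
        rcases Bool.eq_or_eq_not (hg.X t i) (x i) with hb | hb
        · rw [hb, Function.update_eq_self, sub_self]
          exact ⟨min_le_right _ _, le_max_right _ _⟩
        · rw [hb]
          exact ⟨min_le_left _ _, le_max_left _ _⟩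
      have hcur := hg.step_cur t
      rw [← hi] at hcur
      by_cases hw : 0 < hg.W t i (hg.X t)
      · rw [if_pos (hcur.trans (decide_eq_true hw))]
        constructor <;> linarith [ih.1, ih.2, hgap.1]
      · rw [if_neg (by rw [hcur, decide_eq_false hw]; decide)]
        constructor <;> linarith [ih.1, ih.2, hgap.2, not_lt.1 hw]
    · rw [if_neg hact, add_zero]
      exact ih

theorem abs_W_sub_W_lt_two (hπ0 : ∀ x, 0 ≤ π x) (i : Fin N) (x : GState N) (t t' : ℕ) :
    |hg.W t i x - hg.W t' i x| < 2 := by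
  set c := hg.W 0 i x - hg.W 0 i (Function.update x i (!x i))
  have hc : |c| < 1 := by
    have h₁ := hg.init_w i x
    have h₂ := hg.init_w i (Function.update x i (!x i))
    rw [condProb_update] at h₂
    rw [abs_lt]
    constructor <;> linarith
  have hspread : max c 0 - min c 0 = |c| := by rw [max_sub_min_eq_abs', sub_zero]
  have h := hg.W_bounds hπ0 i x t
  have h' := hg.W_bounds hπ0 i x t'
  rw [abs_lt]
  constructor <;> linarith

theorem W_add_eq_of_scanVar_ne {t n : ℕ} {i : Fin N} (x : GState N)
    (h : ∀ r < n, scanVar N hN (t + r + 1) ≠ i) : hg.W (t + n) i x = hg.W t i x := by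
  induction n with
  | zero => rfl
  | succ n ih =>
    rw [← add_assoc, hg.W_succ, if_neg fun h' => h n n.lt_succ_self h'.1.symm, add_zero]
    exact ih fun r hr => h r (hr.trans n.lt_succ_self)

theorem W_next_sweep (k m : ℕ) (y : GState N) :
    hg.W ((k + 1) * N + m) (scanVar N hN (m + 1)) y
      = hg.W (k * N + m) (scanVar N hN (m + 1)) y +
        if ∀ j, j ≠ scanVar N hN (m + 1) → hg.X (k * N + m) j = y j then
          condProb π (scanVar N hN (m + 1)) y true
            - (if hg.X (k * N + m + 1) (scanVar N hN (m + 1)) = true then 1 else 0)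
        else 0 := by
  have hsweep : (k + 1) * N + m = k * N + m + 1 + (N - 1) := by rw [add_one_mul]; omega
  have hquiet : ∀ r < N - 1,
      scanVar N hN (k * N + m + 1 + r + 1) ≠ scanVar N hN (m + 1) := fun r hr => by
    rw [show k * N + m + 1 + r + 1 = k * N + m + (r + 1) + 1 by ring, ← scanVar_mul_add k m]
    exact scanVar_add_ne _ _ r.succ_pos (by omega)
  have hsymm : (∀ j, j ≠ scanVar N hN (m + 1) → y j = hg.X (k * N + m) j)
      ↔ ∀ j, j ≠ scanVar N hN (m + 1) → hg.X (k * N + m) j = y j :=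
    forall₂_congr fun _ _ => eq_comm
  rw [hsweep, hg.W_add_eq_of_scanVar_ne y hquiet, hg.W_succ, scanVar_mul_add]
  simp only [true_and, hsymm]

theorem W_sub_W_eq_sum (τ T m : ℕ) (y : GState N) :
    hg.W ((τ + T) * N + m) (scanVar N hN (m + 1)) y - hg.W (τ * N + m) (scanVar N hN (m + 1)) y
      = ∑ k ∈ Finset.Ico τ (τ + T),
          if ∀ j, j ≠ scanVar N hN (m + 1) → hg.X (k * N + m) j = y j then
            condProb π (scanVar N hN (m + 1)) y true
              - (if hg.X (k * N + m + 1) (scanVar N hN (m + 1)) = true then 1 else 0)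
          else 0 := by
  rw [← Finset.sum_Ico_sub (fun k => hg.W (k * N + m) (scanVar N hN (m + 1)) y)
    (Nat.le_add_right τ T)]
  exact Finset.sum_congr rfl fun k _ => by rw [hg.W_next_sweep]; ring

end HerdedGibbs

noncomputable def empDistAt {N : ℕ} (X : ℕ → GState N) (τ T m : ℕ) : GState N → ℝ :=
  fun y => (((Finset.Ico τ (τ + T)).filter fun k => X (k * N + m) = y).card : ℝ) / T

noncomputable def countDefect {N : ℕ} (hN : 0 < N) (π : GState N → ℝ) (X : ℕ → GState N)
    (τ T m : ℕ) (y : GState N) (b : Bool) : ℝ :=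
  empNum hN X τ T (m + 1) y b
    - empDen hN X τ T (m + 1) y * condProb π (scanVar N hN (m + 1)) y b

section Counts

variable {N : ℕ} {hN : 0 < N}

lemma card_filter_agreeOff (s : Finset ℕ) (Z : ℕ → GState N) (i : Fin N) (y : GState N) :
    (s.filter fun k => ∀ j, j ≠ i → Z k j = y j).card
      = ∑ b, (s.filter fun k => Z k = Function.update y i b).card := by
  rw [Finset.card_eq_sum_card_fiberwise (f := fun k => Z k i) (t := Finset.univ)
    fun _ _ => Finset.mem_coe.2 (Finset.mem_univ _)]
  refine Finset.sum_congr rfl fun b _ => ?_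
  rw [Finset.filter_filter]
  exact congrArg Finset.card (Finset.filter_congr fun k _ =>
    (Function.eq_update_iff.trans and_comm).symm)

lemma empNum_eq_card (X : ℕ → GState N) (τ T m : ℕ) (y : GState N) (b : Bool) :
    empNum hN X τ T (m + 1) y b
      = ((Finset.Ico τ (τ + T)).filter fun k =>
          X (k * N + m + 1) = Function.update y (scanVar N hN (m + 1)) b).card :=
  congrArg Finset.card (Finset.filter_congr fun _ _ =>
    (Function.eq_update_iff.trans and_comm).symm)

lemma empDen_succ (X : ℕ → GState N) (τ T m : ℕ) (y : GState N) :
    empDen hN X τ T (m + 1) y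
      = ((Finset.Ico τ (τ + T)).filter fun k =>
          ∀ j, j ≠ scanVar N hN (m + 1) → X (k * N + m) j = y j).card := by
  simp only [empDen, Nat.add_succ_sub_one]

lemma sum_empDen (X : ℕ → GState N) (τ T m : ℕ) :
    ∑ y, empDen hN X τ T (m + 1) y = 2 * T := by
  simp only [empDen_succ, Finset.card_filter]
  rw [Finset.sum_comm]
  simp only [sum_ite_agreeOff, Finset.sum_const, Finset.card_univ, Fintype.card_bool,
    Nat.card_Ico, smul_eq_mul]
  omega

lemma empDistAt_zero (X : ℕ → GState N) (τ T : ℕ) : empDistAt X τ T 0 = empDist X τ T :=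
  rfl

lemma empDistAt_eq_empDist_succ (X : ℕ → GState N) (τ T : ℕ) :
    empDistAt X τ T N = empDist X (τ + 1) T := by
  funext y
  simp only [empDistAt, empDist]
  rw [show τ + 1 + T = τ + T + 1 by omega, ← Finset.map_add_right_Ico, Finset.filter_map,
    Finset.card_map]
  simp only [Function.comp_def, addRightEmbedding_apply, add_one_mul]

lemma empDistAt_succ (X : ℕ → GState N) (τ T m : ℕ) (y : GState N) :
    empDistAt X τ T (m + 1) y = empNum hN X τ T (m + 1) y (y (scanVar N hN (m + 1))) / T := by
  rw [empNum_eq_card, Function.update_eq_self]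
  rfl

lemma sum_empDistAt_update (X : ℕ → GState N) (τ T m : ℕ) (y : GState N) :
    ∑ b, empDistAt X τ T m (Function.update y (scanVar N hN (m + 1)) b)
      = empDen hN X τ T (m + 1) y / T := by
  simp only [empDistAt, ← Finset.sum_div, ← Nat.cast_sum, empDen_succ, card_filter_agreeOff]

lemma sum_empDist (X : ℕ → GState N) (τ T : ℕ) (hT : 0 < (T : ℝ)) :
    ∑ y, empDist X τ T y = 1 := by
  simp only [empDist]
  rw [← Finset.sum_div, ← Nat.cast_sum, ← Finset.card_eq_sum_card_fiberwise
    fun _ _ => Finset.mem_coe.2 (Finset.mem_univ _), Nat.card_Ico, Nat.add_sub_cancel_left]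
  exact div_self hT.ne'

variable {π : GState N → ℝ}

lemma empDistAt_succ_sub_vecMul (X : ℕ → GState N) (τ T m : ℕ) (y : GState N) :
    empDistAt X τ T (m + 1) y
        - Matrix.vecMul (empDistAt X τ T m) (stepKernel π (scanVar N hN (m + 1))) y
      = countDefect hN π X τ T m y (y (scanVar N hN (m + 1))) / T := by
  rw [empDistAt_succ (hN := hN), vecMul_stepKernel, sum_empDistAt_update, countDefect]
  ring

end Counts

namespace HerdedGibbs

variable {N : ℕ} {hN : 0 < N} {π : GState N → ℝ} (hg : HerdedGibbs N hN π)

theorem empNum_eq_card_agreeOff (τ T m : ℕ) (y : GState N) (b : Bool) :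
    empNum hN hg.X τ T (m + 1) y b
      = ((Finset.Ico τ (τ + T)).filter fun k =>
          (∀ j, j ≠ scanVar N hN (m + 1) → hg.X (k * N + m) j = y j)
            ∧ hg.X (k * N + m + 1) (scanVar N hN (m + 1)) = b).card := by
  have hstep : ∀ k, ∀ j, j ≠ scanVar N hN (m + 1) → hg.X (k * N + m + 1) j = hg.X (k * N + m) j :=
    fun k j hj => hg.step_other _ j (by rwa [scanVar_mul_add])
  refine congrArg Finset.card (Finset.filter_congr fun k _ => and_congr_left' ?_)
  exact forall₂_congr fun j hj => by rw [← hstep k j hj]; rfl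

theorem empDen_eq_sum_empNum (τ T m : ℕ) (y : GState N) :
    empDen hN hg.X τ T (m + 1) y = ∑ b, empNum hN hg.X τ T (m + 1) y b := by
  rw [empDen_succ, Finset.card_eq_sum_card_fiberwise
    (f := fun k => hg.X (k * N + m + 1) (scanVar N hN (m + 1))) (t := Finset.univ)
    fun _ _ => Finset.mem_coe.2 (Finset.mem_univ _)]
  simp only [Finset.filter_filter, hg.empNum_eq_card_agreeOff]

theorem empNum_eq_zero (hπ0 : ∀ x, 0 ≤ π x) {τ T m : ℕ} {y : GState N} {b : Bool}
    (h : π (Function.update y (scanVar N hN (m + 1)) b) = 0) :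
    empNum hN hg.X τ T (m + 1) y b = 0 := by
  rw [empNum_eq_card, Finset.card_eq_zero, Finset.filter_eq_empty_iff]
  intro k _ hk
  exact (hg.pi_X_pos hπ0 _).ne' (hk ▸ h)

theorem countDefect_true (τ T m : ℕ) (y : GState N) :
    countDefect hN π hg.X τ T m y true
      = hg.W (τ * N + m) (scanVar N hN (m + 1)) y
        - hg.W ((τ + T) * N + m) (scanVar N hN (m + 1)) y := by
  rw [← neg_sub, hg.W_sub_W_eq_sum, countDefect, hg.empNum_eq_card_agreeOff, empDen_succ,
    Finset.natCast_card_filter, Finset.natCast_card_filter, Finset.sum_mul,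
    ← Finset.sum_sub_distrib, ← Finset.sum_neg_distrib]
  refine Finset.sum_congr rfl fun k _ => ?_
  split_ifs <;> simp_all

theorem abs_countDefect_true_lt_two (hπ0 : ∀ x, 0 ≤ π x) (τ T m : ℕ) (y : GState N) :
    |countDefect hN π hg.X τ T m y true| < 2 := by
  rw [hg.countDefect_true]
  exact hg.abs_W_sub_W_lt_two hπ0 _ _ _ _

theorem sum_countDefect (hπ0 : ∀ x, 0 ≤ π x) (τ T m : ℕ) (y : GState N) :
    ∑ b, countDefect hN π hg.X τ T m y b = 0 := by
  simp only [countDefect, Finset.sum_sub_distrib, ← Finset.mul_sum, ← Nat.cast_sum,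
    ← hg.empDen_eq_sum_empNum]
  by_cases hD : π (Function.update y (scanVar N hN (m + 1)) true)
      + π (Function.update y (scanVar N hN (m + 1)) false) = 0
  · obtain ⟨ht, hf⟩ := (add_eq_zero_iff_of_nonneg (hπ0 _) (hπ0 _)).1 hD
    rw [hg.empDen_eq_sum_empNum, Fintype.sum_bool, hg.empNum_eq_zero hπ0 ht,
      hg.empNum_eq_zero hπ0 hf]
    simp
  · rw [sum_condProb_eq_one hD]
    ring

theorem countDefect_eq_zero (hπ0 : ∀ x, 0 ≤ π x) {τ T m : ℕ} {y : GState N} {b : Bool}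
    (h : π (Function.update y (scanVar N hN (m + 1)) b) = 0) :
    countDefect hN π hg.X τ T m y b = 0 := by
  rw [countDefect, hg.empNum_eq_zero hπ0 h, condProb_eq_zero h]
  simp

/-- Either every state of the class is visited at the linear rate, so that `N_den ≥ l T`,
or one of them has probability zero and the defect vanishes. -/
theorem abs_countDefect_le (hπ0 : ∀ x, 0 ≤ π x) {l B : ℝ} {τ T m : ℕ} (hlT : 0 < l * T)
    (hBT : 2 * B ≤ l * T) {y : GState N}
    (hvisit : ∀ b, 0 < π (Function.update y (scanVar N hN (m + 1)) b) →
      l * T - B ≤ empNum hN hg.X τ T (m + 1) y b) (b : Bool) :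
    |countDefect hN π hg.X τ T m y b| ≤ 2 * empDen hN hg.X τ T (m + 1) y / (l * T) := by
  have hsymm : ∀ b, |countDefect hN π hg.X τ T m y b| = |countDefect hN π hg.X τ T m y true| := by
    have hsum := hg.sum_countDefect hπ0 τ T m y
    rw [Fintype.sum_bool] at hsum
    rintro (_ | _)
    · rw [eq_neg_of_add_eq_zero_right hsum, abs_neg]
    · rfl
  by_cases hpos : ∀ b, 0 < π (Function.update y (scanVar N hN (m + 1)) b)
  · have hDen : l * T ≤ empDen hN hg.X τ T (m + 1) y := by
      rw [hg.empDen_eq_sum_empNum, Nat.cast_sum, Fintype.sum_bool]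
      linarith [hvisit true (hpos true), hvisit false (hpos false)]
    rw [hsymm, le_div_iff₀ hlT]
    calc _ ≤ 2 * (l * T) := by
          gcongr
          exact (hg.abs_countDefect_true_lt_two hπ0 τ T m y).le
      _ ≤ _ := by gcongr
  · obtain ⟨b', hb'⟩ := not_forall.1 hpos
    rw [hsymm, ← hsymm b', hg.countDefect_eq_zero hπ0 (le_antisymm (not_lt.1 hb') (hπ0 _)),
      abs_zero]
    positivity

theorem tvDist_empDistAt_succ_le (hπ0 : ∀ x, 0 ≤ π x) {l B : ℝ} {τ T m : ℕ} (hl : 0 < l)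
    (hT : 0 < (T : ℝ)) (hBT : 2 * B ≤ l * T)
    (hvisit : ∀ y b, 0 < π (Function.update y (scanVar N hN (m + 1)) b) →
      l * T - B ≤ empNum hN hg.X τ T (m + 1) y b) :
    tvDist (empDistAt hg.X τ T (m + 1))
        (Matrix.vecMul (empDistAt hg.X τ T m) (stepKernel π (scanVar N hN (m + 1))))
      ≤ 2 / (l * T) := by
  have hlT : 0 < l * T := mul_pos hl hT
  rw [tvDist]
  simp only [empDistAt_succ_sub_vecMul, abs_div, abs_of_pos hT]
  calc (∑ y, |countDefect hN π hg.X τ T m y (y (scanVar N hN (m + 1)))| / T) / 2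
      ≤ (∑ y, 2 * empDen hN hg.X τ T (m + 1) y / (l * T) / T) / 2 := by
        gcongr with y
        exact hg.abs_countDefect_le hπ0 hlT hBT (hvisit y) _
    _ = 2 / (l * T) := by
        rw [← Finset.sum_div, ← Finset.sum_div, ← Finset.mul_sum, ← Nat.cast_sum, sum_empDen]
        field_simp
        push_cast
        ring

theorem tvDist_empDist_succ_le (hπ0 : ∀ x, 0 ≤ π x) {l B : ℝ} {τ T : ℕ} (hl : 0 < l)
    (hT : 0 < (T : ℝ)) (hBT : 2 * B ≤ l * T)
    (hvisit : ∀ m < N, ∀ y b, 0 < π (Function.update y (scanVar N hN (m + 1)) b) →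
      l * T - B ≤ empNum hN hg.X τ T (m + 1) y b) :
    tvDist (empDist hg.X (τ + 1) T) (Matrix.vecMul (empDist hg.X τ T) (sweepKernel π))
      ≤ N * (2 / (l * T)) := by
  rw [← empDistAt_eq_empDist_succ, ← empDistAt_zero]
  refine tvDist_vecMul_ofFn_prod_le _ _ (stepKernel_nonneg hπ0) sum_stepKernel_le_one
    fun i => ?_
  have := hg.tvDist_empDistAt_succ_le hπ0 hl hT hBT (hvisit i i.isLt)
  rwa [scanVar_succ] at this

end HerdedGibbs

theorem herded_gibbs_recursive_distance_general {N : ℕ} (hN : 0 < N)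
    (π : GState N → ℝ) (hπ0 : ∀ x, 0 ≤ π x) (hπ1 : ∑ x, π x = 1)
    (hg : HerdedGibbs N hN π)
    (l B : ℝ) (hl : 0 < l) (hB : 0 < B)
    (hrate : ∀ i : ℕ, 1 ≤ i → i ≤ N → ∀ x : GState N, 0 < π x → ∀ T s : ℕ,
      l * (T : ℝ) - B
        ≤ (((Finset.Ico s (s + T)).filter fun k => hg.X (k * N + i) = x).card : ℝ))
    (τ T : ℕ) (hT : 2 * B / l ≤ (T : ℝ)) :
    tvDist (empDist hg.X (τ + 1) T) π
      ≤ 2 * (N : ℝ) / (l * T) + dobrushin (sweepKernel π) * tvDist (empDist hg.X τ T) π := by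
  have hTpos : 0 < (T : ℝ) := (div_pos (mul_pos two_pos hB) hl).trans_le hT
  have hBT : 2 * B ≤ l * T := by rw [div_le_iff₀ hl] at hT; linarith
  have hvisit : ∀ m < N, ∀ y b, 0 < π (Function.update y (scanVar N hN (m + 1)) b) →
      l * T - B ≤ empNum hN hg.X τ T (m + 1) y b := fun m hm y b hpos => by
    rw [empNum_eq_card]
    exact hrate (m + 1) m.succ_pos hm _ hpos T τ
  have hcontract := tvDist_vecMul_le_dobrushin_mul (sweepKernel π)
    ((sum_empDist hg.X τ T hTpos).trans hπ1.symm)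
  rw [vecMul_sweepKernel_self hπ0] at hcontract
  calc tvDist (empDist hg.X (τ + 1) T) π
      ≤ tvDist (empDist hg.X (τ + 1) T) (Matrix.vecMul (empDist hg.X τ T) (sweepKernel π))
        + tvDist (Matrix.vecMul (empDist hg.X τ T) (sweepKernel π)) π := tvDist_triangle _ _ _
    _ ≤ N * (2 / (l * T)) + dobrushin (sweepKernel π) * tvDist (empDist hg.X τ T) π :=
        add_le_add (hg.tvDist_empDist_succ_le hπ0 hl hTpos hBT hvisit) hcontract
    _ = _ := by ring

/-- Recursive distance inequality: with d_τ the total variation distance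
of the herded Gibbs empirical distribution at sweep τ from the target π, linear visiting
rate constants l, B, Dobrushin coefficient η := dobrushin(𝒯) < 1 of the Gibbs sweep
kernel, and T ≥ T* := 2B/l, one has d_{τ+1} ≤ 2N/(lT) + η·d_τ. -/
theorem herded_gibbs_recursive_distance {N : ℕ} (hN : 0 < N)
    (π : GState N → ℝ) (hπ0 : ∀ x, 0 ≤ π x) (hπ1 : ∑ x, π x = 1)
    (hg : HerdedGibbs N hN π)
    (l B : ℝ) (hl : 0 < l) (hB : 0 < B)
    (hrate : ∀ i : ℕ, 1 ≤ i → i ≤ N → ∀ x : GState N, 0 < π x → ∀ T s : ℕ,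
      l * (T : ℝ) - B
        ≤ (((Finset.Ico s (s + T)).filter fun k => hg.X (k * N + i) = x).card : ℝ))
    (hη : dobrushin (sweepKernel π) < 1)
    (τ T : ℕ) (hT : 2 * B / l ≤ (T : ℝ)) :
    tvDist (empDist hg.X (τ + 1) T) π
      ≤ 2 * (N : ℝ) / (l * T) + dobrushin (sweepKernel π) * tvDist (empDist hg.X τ T) π :=
  herded_gibbs_recursive_distance_general hN π hπ0 hπ1 hg l B hl hB hrate τ T hT
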